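/- On IC_n, the composite relations satisfy R*∘L*∘R* = L*∘R*∘L*, this common relation is the smallest equivalence relation D* containing both L* and R*, and for α, β ∈ IC_n one has (α, β) ∈ D* if and only if |im α| = |im β|. -/

import Mathlib

open scoped Classical

namespace ICCatalan

/-- Partial injective transformations on `Fin n` (representing the chain `[n] = {1,…,n}`). -/
abbrev PT (n : ℕ) := Fin n ≃. Fin n

/-- Composition (left-to-right, `x(αβ) = (xα)β`) makes `PT n` a monoid. -/
noncomputable instance instMonoidPT (n : ℕ) : Monoid (PT n) where
  mul f g := f.trans g
  one := PEquiv.refl (Fin n)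
  mul_assoc := PEquiv.trans_assoc
  one_mul := PEquiv.refl_trans
  mul_one := PEquiv.trans_refl

lemma mul_def {n : ℕ} (f g : PT n) : f * g = f.trans g := rfl

/-- The domain of a partial transformation. -/
def pdom {n : ℕ} (f : PT n) : Set (Fin n) := {x | ∃ y, f x = some y}

/-- The image of a partial transformation. -/
def pim {n : ℕ} (f : PT n) : Set (Fin n) := {y | ∃ x, f x = some y}

/-- The height `|im f|` of a partial transformation. -/
noncomputable def height {n : ℕ} (f : PT n) : ℕ := (pim f).ncard

/-- `f` is order-decreasing: `xf ≤ x` on the domain. -/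
def IsDecr {n : ℕ} (f : PT n) : Prop := ∀ x y : Fin n, f x = some y → y ≤ x

/-- `f` is isotone: `x ≤ y` implies `xf ≤ yf` on the domain. -/
def IsIso {n : ℕ} (f : PT n) : Prop :=
  ∀ x₁ x₂ y₁ y₂ : Fin n, f x₁ = some y₁ → f x₂ = some y₂ → x₁ ≤ x₂ → y₁ ≤ y₂

/-- The injective partial Catalan monoid `IC_n`: all isotone order-decreasing
partial injective transformations of `[n]`. -/
def IC (n : ℕ) : Set (PT n) := {f | IsIso f ∧ IsDecr f}

/-- `Q'_n = {α ∈ IC_n : 1 ∉ dom α}` (the least element of `Fin n` plays the role of `1 ∈ [n]`). -/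
def Qp (n : ℕ) : Set (PT n) := {f | f ∈ IC n ∧ ∀ x : Fin n, (x : ℕ) = 0 → f x = none}

/-- `S¹ : S` with an identity adjoined (realized inside `PT n`). -/
def SOne {n : ℕ} (S : Set (PT n)) : Set (PT n) := S ∪ {1}

/-- The starred Green relation `L*` of the subsemigroup `S`. -/
def LStar {n : ℕ} (S : Set (PT n)) (a b : PT n) : Prop :=
  ∀ x ∈ SOne S, ∀ y ∈ SOne S, (a * x = a * y ↔ b * x = b * y)

/-- The starred Green relation `R*` of the subsemigroup `S`. -/
def RStar {n : ℕ} (S : Set (PT n)) (a b : PT n) : Prop :=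
  ∀ x ∈ SOne S, ∀ y ∈ SOne S, (x * a = y * a ↔ x * b = y * b)

/-- The starred Green relation `H* = L* ∩ R*`. -/
def HStar {n : ℕ} (S : Set (PT n)) (a b : PT n) : Prop :=
  LStar S a b ∧ RStar S a b

/-- The partial identity on a subset `A` of `[n]`. -/
noncomputable def pid {n : ℕ} (A : Set (Fin n)) : PT n := PEquiv.ofSet A

/-- An essential element: exactly one point `y` of the domain is moved, and `yf = y - 1`. -/
def IsEssential {n : ℕ} (f : PT n) : Prop :=
  ∃ y z : Fin n, f y = some z ∧ (z : ℕ) + 1 = (y : ℕ) ∧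
    ∀ x w : Fin n, f x = some w → w ≠ x → x = y

/-- The shift of `f`: the number of non-fixed points of its domain. -/
noncomputable def shift {n : ℕ} (f : PT n) : ℕ := {x : Fin n | ∃ w, f x = some w ∧ w ≠ x}.ncard


/-- `L*` of `IC_n`, as a relation on the elements of `IC_n`. -/
def LSr (n : ℕ) : ↥(IC n) → ↥(IC n) → Prop := fun a b => LStar (IC n) a.1 b.1

/-- `R*` of `IC_n`, as a relation on the elements of `IC_n`. -/
def RSr (n : ℕ) : ↥(IC n) → ↥(IC n) → Prop := fun a b => RStar (IC n) a.1 b.1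

/-- `D*`: the smallest equivalence relation containing both `L*` and `R*`. -/
def DSr (n : ℕ) : ↥(IC n) → ↥(IC n) → Prop :=
  Relation.EqvGen (fun a b => LSr n a b ∨ RSr n a b)


/-!
Since `IC_n` contains every partial identity, `L*` and `R*` on it are equality of images and of
domains, so all these relations preserve the height. Conversely, if `|dom α| = |dom β| = k` with
enumerations `a₁ < ⋯ < a_k` and `b₁ < ⋯ < b_k`, the partial maps `aᵢ ↦ min aᵢ bᵢ` and
`bᵢ ↦ min aᵢ bᵢ` lie in `IC_n` and link `α R* · L* · R* β`; dually, for images enumerated by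
`aᵢ`, `bᵢ`, the maps `max aᵢ bᵢ ↦ aᵢ` and `max aᵢ bᵢ ↦ bᵢ` link `α L* · R* · L* β`.
-/

open Function

variable {n : ℕ}

lemma mul_apply (f g : PT n) (x : Fin n) : (f * g) x = (f x).bind g := rfl

lemma one_apply (x : Fin n) : (1 : PT n) x = some x := rfl

lemma pid_apply_of_mem {A : Set (Fin n)} {x : Fin n} (h : x ∈ A) : pid A x = some x :=
  PEquiv.ofSet_eq_some_self_iff.mpr h

lemma pid_apply_of_notMem {A : Set (Fin n)} {x : Fin n} (h : x ∉ A) : pid A x = none := by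
  simp [pid, PEquiv.ofSet, h]

lemma pid_mem_IC (A : Set (Fin n)) : pid A ∈ IC n := by
  constructor
  · intro x₁ x₂ y₁ y₂ h₁ h₂ hle
    rwa [(PEquiv.ofSet_eq_some_iff.mp h₁).1, (PEquiv.ofSet_eq_some_iff.mp h₂).1]
  · intro x y h
    exact (PEquiv.ofSet_eq_some_iff.mp h).1.le

lemma mem_pdom_iff (f : PT n) (x : Fin n) : x ∈ pdom f ↔ f x ≠ none :=
  Option.ne_none_iff_exists'.symm

lemma mul_pid_of_pim_subset (f : PT n) {A : Set (Fin n)} (h : pim f ⊆ A) : f * pid A = f := by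
  ext1 x
  cases hx : f x with
  | none => rw [mul_apply, hx]; rfl
  | some y => rw [mul_apply, hx, Option.bind_some, pid_apply_of_mem (h ⟨x, hx⟩)]

lemma pid_pdom_mul (f : PT n) : pid (pdom f) * f = f := by
  ext1 x
  by_cases hx : x ∈ pdom f
  · rw [mul_apply, pid_apply_of_mem hx, Option.bind_some]
  · rw [mul_apply, pid_apply_of_notMem hx, Option.bind_none,
      not_not.mp (mt (mem_pdom_iff f x).mpr hx)]

lemma mul_symm_self (f : PT n) : f * f.symm = pid (pdom f) := by
  rw [mul_def, PEquiv.self_trans_symm, pid]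
  congr 1
  ext x
  cases h : f x <;> simp [pdom, h]

lemma mul_eq_mul_left_iff (f x y : PT n) : f * x = f * y ↔ ∀ q ∈ pim f, x q = y q := by
  constructor
  · rintro h q ⟨p, hp⟩
    simpa [mul_apply, hp] using DFunLike.congr_fun h p
  · intro h
    ext1 p
    cases hp : f p with
    | none => rw [mul_apply, mul_apply, hp]; rfl
    | some q => rw [mul_apply, mul_apply, hp, Option.bind_some, Option.bind_some, h q ⟨p, hp⟩]

lemma mul_eq_mul_right_iff (f x y : PT n) :
    x * f = y * f ↔ x * pid (pdom f) = y * pid (pdom f) := by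
  constructor
  · intro h
    rw [← mul_symm_self, ← mul_assoc, h, mul_assoc]
  · intro h
    calc x * f = x * pid (pdom f) * f := by rw [mul_assoc, pid_pdom_mul]
      _ = y * pid (pdom f) * f := by rw [h]
      _ = y * f := by rw [mul_assoc, pid_pdom_mul]

section StarRelations

variable {S : Set (PT n)}

lemma pim_subset_of_lStar (hS : ∀ A, pid A ∈ S) {a b : PT n} (h : LStar S a b) :
    pim b ⊆ pim a := by
  have hb : b * 1 = b * pid (pim a) :=
    (h 1 (Or.inr rfl) _ (Or.inl (hS _))).mp (by rw [mul_one, mul_pid_of_pim_subset a le_rfl])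
  intro q hq
  have := (mul_eq_mul_left_iff b 1 _).mp hb q hq
  rw [one_apply] at this
  exact (PEquiv.ofSet_eq_some_iff.mp this.symm).2

theorem lStar_iff_pim_eq (hS : ∀ A, pid A ∈ S) {a b : PT n} :
    LStar S a b ↔ pim a = pim b :=
  ⟨fun h ↦ (pim_subset_of_lStar hS fun x hx y hy ↦ (h x hx y hy).symm).antisymm
      (pim_subset_of_lStar hS h),
    fun h x _ y _ ↦ by rw [mul_eq_mul_left_iff, mul_eq_mul_left_iff, h]⟩

lemma pdom_subset_of_rStar (hS : ∀ A, pid A ∈ S) {a b : PT n} (h : RStar S a b) :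
    pdom b ⊆ pdom a := by
  have hb : 1 * b = pid (pdom a) * b :=
    (h 1 (Or.inr rfl) _ (Or.inl (hS _))).mp (by rw [one_mul, pid_pdom_mul])
  intro q hq
  by_contra hqa
  have := DFunLike.congr_fun hb q
  rw [mul_apply, mul_apply, one_apply, Option.bind_some, pid_apply_of_notMem hqa,
    Option.bind_none] at this
  exact (mem_pdom_iff b q).mp hq this

theorem rStar_iff_pdom_eq (hS : ∀ A, pid A ∈ S) {a b : PT n} :
    RStar S a b ↔ pdom a = pdom b :=
  ⟨fun h ↦ (pdom_subset_of_rStar hS fun x hx y hy ↦ (h x hx y hy).symm).antisymm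
      (pdom_subset_of_rStar hS h),
    fun h x _ y _ ↦ by rw [mul_eq_mul_right_iff, mul_eq_mul_right_iff b, h]⟩

end StarRelations

lemma ncard_pdom (f : PT n) : (pdom f).ncard = height f := by
  refine Set.ncard_congr (fun x (hx : ∃ y, f x = some y) ↦ hx.choose)
    (fun x hx ↦ ⟨x, hx.choose_spec⟩) ?_ ?_
  · intro x x' hx hx' h
    exact f.inj hx.choose_spec (h ▸ hx'.choose_spec)
  · rintro y ⟨x, hx⟩
    have hdom : ∃ y, f x = some y := ⟨y, hx⟩
    exact ⟨x, hdom, Option.some_injective _ (hdom.choose_spec.symm.trans hx)⟩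

lemma exists_strictMono_range_eq (A : Set (Fin n)) {k : ℕ} (hA : A.ncard = k) :
    ∃ e : Fin k → Fin n, StrictMono e ∧ Set.range e = A :=
  ⟨A.toFinset.orderEmbOfFin (by rwa [← Set.ncard_eq_toFinset_card']),
    OrderEmbedding.strictMono _, by simp [Finset.range_orderEmbOfFin]⟩

noncomputable def pairPEquiv {ι α β : Type*} (u : ι → α) (v : ι → β) (hu : Injective u)
    (hv : Injective v) : α ≃. β where
  toFun x := (partialInv u x).map v
  invFun y := (partialInv v y).map u
  inv x y := by
    simp only [Option.map_eq_some_iff, hu.isPartialInv _, hv.isPartialInv _]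
    constructor <;> rintro ⟨i, rfl, rfl⟩ <;> exact ⟨i, rfl, rfl⟩

lemma pairPEquiv_eq_some_iff {ι α β : Type*} {u : ι → α} {v : ι → β} (hu : Injective u)
    (hv : Injective v) {x : α} {y : β} :
    pairPEquiv u v hu hv x = some y ↔ ∃ i, u i = x ∧ v i = y := by
  simp only [pairPEquiv, PEquiv.coe_mk, Option.map_eq_some_iff, hu.isPartialInv _]

theorem exists_mem_IC_pdom_pim {ι : Type*} [LinearOrder ι] {u v : ι → Fin n}
    (hu : StrictMono u) (hv : StrictMono v) (hvu : ∀ i, v i ≤ u i) :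
    ∃ c ∈ IC n, pdom c = Set.range u ∧ pim c = Set.range v := by
  have hc : ∀ {x y}, pairPEquiv u v hu.injective hv.injective x = some y ↔
      ∃ i, u i = x ∧ v i = y := pairPEquiv_eq_some_iff _ _
  refine ⟨pairPEquiv u v hu.injective hv.injective, ⟨?_, ?_⟩, ?_, ?_⟩
  · rintro _ _ _ _ h₁ h₂ hle
    obtain ⟨i, rfl, rfl⟩ := hc.mp h₁
    obtain ⟨j, rfl, rfl⟩ := hc.mp h₂
    exact hv.monotone (hu.le_iff_le.mp hle)
  · rintro _ _ h
    obtain ⟨i, rfl, rfl⟩ := hc.mp h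
    exact hvu i
  · ext x
    simp only [pdom, Set.mem_ofPred_eq, hc, Set.mem_range]
    exact ⟨fun ⟨_, i, hi, _⟩ ↦ ⟨i, hi⟩, fun ⟨i, hi⟩ ↦ ⟨v i, i, hi, rfl⟩⟩
  · ext y
    simp only [pim, Set.mem_ofPred_eq, hc, Set.mem_range]
    exact ⟨fun ⟨_, i, _, hi⟩ ↦ ⟨i, hi⟩, fun ⟨i, hi⟩ ↦ ⟨u i, i, rfl, hi⟩⟩

theorem exists_pdom_pim_pdom_chain {a b : PT n} (h : height a = height b) :
    ∃ c ∈ IC n, ∃ d ∈ IC n, pdom a = pdom c ∧ pim c = pim d ∧ pdom d = pdom b := by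
  obtain ⟨ea, hea, hra⟩ := exists_strictMono_range_eq (pdom a) (ncard_pdom a)
  obtain ⟨eb, heb, hrb⟩ := exists_strictMono_range_eq (pdom b) ((ncard_pdom b).trans h.symm)
  have hw : StrictMono fun i ↦ min (ea i) (eb i) := fun i j hij ↦
    lt_min ((min_le_left _ _).trans_lt (hea hij)) ((min_le_right _ _).trans_lt (heb hij))
  obtain ⟨c, hc, hdc, hic⟩ := exists_mem_IC_pdom_pim hea hw fun i ↦ min_le_left _ _
  obtain ⟨d, hd, hdd, hid⟩ := exists_mem_IC_pdom_pim heb hw fun i ↦ min_le_right _ _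
  exact ⟨c, hc, d, hd, hra ▸ hdc.symm, hic.trans hid.symm, hdd.trans hrb⟩

theorem exists_pim_pdom_pim_chain {a b : PT n} (h : height a = height b) :
    ∃ c ∈ IC n, ∃ d ∈ IC n, pim a = pim c ∧ pdom c = pdom d ∧ pim d = pim b := by
  obtain ⟨ea, hea, hra⟩ := exists_strictMono_range_eq (pim a) rfl
  obtain ⟨eb, heb, hrb⟩ := exists_strictMono_range_eq (pim b) h.symm
  have hw : StrictMono fun i ↦ max (ea i) (eb i) := fun i j hij ↦ max_lt_max (hea hij) (heb hij)
  obtain ⟨c, hc, hdc, hic⟩ := exists_mem_IC_pdom_pim hw hea fun i ↦ le_max_left _ _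
  obtain ⟨d, hd, hdd, hid⟩ := exists_mem_IC_pdom_pim hw heb fun i ↦ le_max_right _ _
  exact ⟨c, hc, d, hd, hra ▸ hic.symm, hdc.trans hdd.symm, hid.trans hrb⟩

lemma lSr_iff {a b : IC n} : LSr n a b ↔ pim a.1 = pim b.1 :=
  lStar_iff_pim_eq pid_mem_IC

lemma rSr_iff {a b : IC n} : RSr n a b ↔ pdom a.1 = pdom b.1 :=
  rStar_iff_pdom_eq pid_mem_IC

lemma height_eq_of_lSr {a b : IC n} (h : LSr n a b) : height a.1 = height b.1 := by
  rw [height, height, lSr_iff.mp h]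

lemma height_eq_of_rSr {a b : IC n} (h : RSr n a b) : height a.1 = height b.1 := by
  rw [← ncard_pdom, ← ncard_pdom, rSr_iff.mp h]

theorem comp_rSr_lSr_rSr_iff {a b : IC n} :
    Relation.Comp (Relation.Comp (RSr n) (LSr n)) (RSr n) a b ↔ height a.1 = height b.1 := by
  constructor
  · rintro ⟨d, ⟨c, hac, hcd⟩, hdb⟩
    exact (height_eq_of_rSr hac).trans <| (height_eq_of_lSr hcd).trans (height_eq_of_rSr hdb)
  · intro h
    obtain ⟨c, hc, d, hd, hac, hcd, hdb⟩ := exists_pdom_pim_pdom_chain h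
    exact ⟨⟨d, hd⟩, ⟨⟨c, hc⟩, rSr_iff.mpr hac, lSr_iff.mpr hcd⟩, rSr_iff.mpr hdb⟩

theorem comp_lSr_rSr_lSr_iff {a b : IC n} :
    Relation.Comp (Relation.Comp (LSr n) (RSr n)) (LSr n) a b ↔ height a.1 = height b.1 := by
  constructor
  · rintro ⟨d, ⟨c, hac, hcd⟩, hdb⟩
    exact (height_eq_of_lSr hac).trans <| (height_eq_of_rSr hcd).trans (height_eq_of_lSr hdb)
  · intro h
    obtain ⟨c, hc, d, hd, hac, hcd, hdb⟩ := exists_pim_pdom_pim_chain h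
    exact ⟨⟨d, hd⟩, ⟨⟨c, hc⟩, lSr_iff.mpr hac, rSr_iff.mpr hcd⟩, lSr_iff.mpr hdb⟩

theorem dSr_iff {a b : IC n} : DSr n a b ↔ height a.1 = height b.1 := by
  constructor
  · intro h
    induction h with
    | rel x y hxy => exact hxy.elim height_eq_of_lSr height_eq_of_rSr
    | refl => rfl
    | symm _ _ _ ih => exact ih.symm
    | trans _ _ _ _ _ ih₁ ih₂ => exact ih₁.trans ih₂
  · intro h
    obtain ⟨d, ⟨c, hac, hcd⟩, hdb⟩ := comp_rSr_lSr_rSr_iff.mpr h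
    exact .trans _ _ _ (.trans _ _ _ (.rel _ _ (.inr hac)) (.rel _ _ (.inl hcd)))
      (.rel _ _ (.inr hdb))

theorem stmt5_general (n : ℕ) :
    (Relation.Comp (Relation.Comp (RSr n) (LSr n)) (RSr n) =
      Relation.Comp (Relation.Comp (LSr n) (RSr n)) (LSr n)) ∧
    (Relation.Comp (Relation.Comp (RSr n) (LSr n)) (RSr n) = DSr n) ∧
    (∀ a b : ↥(IC n), DSr n a b ↔ height (a : PT n) = height (b : PT n)) := by
  have hRLR : Relation.Comp (Relation.Comp (RSr n) (LSr n)) (RSr n) =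
      fun a b ↦ height a.1 = height b.1 := by
    funext a b; exact propext comp_rSr_lSr_rSr_iff
  refine ⟨?_, ?_, fun a b ↦ dSr_iff⟩
  · rw [hRLR]; funext a b; exact propext comp_lSr_rSr_lSr_iff.symm
  · rw [hRLR]; funext a b; exact propext dSr_iff.symm

/-- on `IC_n` one has `R*∘L*∘R* = L*∘R*∘L*`, this common relation equals
`D*` (the smallest equivalence containing `L*` and `R*`), and `(α,β) ∈ D*` iff
`|im α| = |im β|`. -/
theorem stmt5 (n : ℕ) (hn : 0 < n) :
    (Relation.Comp (Relation.Comp (RSr n) (LSr n)) (RSr n) =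
      Relation.Comp (Relation.Comp (LSr n) (RSr n)) (LSr n)) ∧
    (Relation.Comp (Relation.Comp (RSr n) (LSr n)) (RSr n) = DSr n) ∧
    (∀ a b : ↥(IC n), DSr n a b ↔ height (a : PT n) = height (b : PT n)) :=
  stmt5_general n

end ICCatalan
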